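/- Let 0 ≤ k ≤ n and σ ∈ Σ(k,n) with complement σ^c ∈ Σ_0(n−k,n). Then dλ_σ ∧ φ_{σ^c} = (−1)^k ε(σ,σ^c) Σ_{q ∈ [σ^c]} λ_q φ_T, where φ_T is the Whitney form associated with the full index set [0:n] and ε(σ,σ^c) is the sign of the permutation ordering σ(1),…,σ(k),σ^c(0),…,σ^c(n−k). -/

import Mathlib

open ExteriorAlgebra

set_option synthInstance.maxHeartbeats 1000000
set_option maxHeartbeats 1000000

noncomputable section

def invSign {m : ℕ} {α : Type*} [LinearOrder α] (f : Fin m → α) : ℤ :=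
  (-1 : ℤ) ^ (Finset.univ.filter
    (fun p : Fin m × Fin m => p.1 < p.2 ∧ f p.2 < f p.1)).card

def epsIns {n : ℕ} (q : Fin n) (s : Finset (Fin n)) : ℤ :=
  (-1 : ℤ) ^ (s.filter (fun x => x < q)).card

def epsApp {n : ℕ} (q : Fin n) (s : Finset (Fin n)) : ℤ :=
  (-1 : ℤ) ^ (s.filter (fun x => q < x)).card

def sortedOfFinset {n : ℕ} (s : Finset (Fin (n + 1))) (m : ℕ) : Fin m → Fin (n + 1) :=
  if h : s.card = m then fun i => (s.orderIsoOfFin h i : Fin (n + 1)) else fun _ => 0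

variable {n : ℕ} {E : Type*} [AddCommGroup E] [Module ℝ E]

def dlam (b : AffineBasis (Fin (n + 1)) ℝ E) (i : Fin (n + 1)) : Module.Dual ℝ E :=
  (b.coord i).linear

def dlamWedge (b : AffineBasis (Fin (n + 1)) ℝ E) {k : ℕ} (σ : Fin k → Fin (n + 1)) :
    ExteriorAlgebra ℝ (Module.Dual ℝ E) :=
  (List.ofFn fun i => ι ℝ (dlam b (σ i))).prod

def lamPow (b : AffineBasis (Fin (n + 1)) ℝ E) (α : Fin (n + 1) → ℕ) (x : E) : ℝ :=
  ∏ i, b.coord i x ^ α i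

def whitneyForm (b : AffineBasis (Fin (n + 1)) ℝ E) {m : ℕ} (ρ : Fin m → Fin (n + 1)) (x : E) :
    ExteriorAlgebra ℝ (Module.Dual ℝ E) :=
  ∑ j : Fin m,
    ((epsIns (ρ j) ((Finset.image ρ Finset.univ).erase (ρ j)) : ℝ) * b.coord (ρ j) x) •
      dlamWedge b (sortedOfFinset ((Finset.image ρ Finset.univ).erase (ρ j)) (m - 1))

/-! ### Auxiliary lemmas -/


theorem sortedOfFinset_eq {s : Finset (Fin (n+1))} {m : ℕ} (h : s.card = m) :
    sortedOfFinset s m = fun i => s.orderEmbOfFin h i := by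
  simp only [sortedOfFinset, dif_pos h]; rfl

theorem dlamWedge_eq (b : AffineBasis (Fin (n + 1)) ℝ E) {m : ℕ} (σ : Fin m → Fin (n+1)) :
    dlamWedge b σ = ExteriorAlgebra.ιMulti ℝ m (fun i => dlam b (σ i)) :=
  (ExteriorAlgebra.ιMulti_apply _).symm

theorem dlamWedge_sorted_congr (b : AffineBasis (Fin (n + 1)) ℝ E) {s : Finset (Fin (n+1))}
    {m m' : ℕ} (h : m = m') :
    dlamWedge b (sortedOfFinset s m) = dlamWedge b (sortedOfFinset s m') := by
  subst h; rfl

theorem sum_dlam (b : AffineBasis (Fin (n + 1)) ℝ E) : ∑ i, dlam b i = 0 := by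
  apply LinearMap.ext; intro w
  have key : ∀ i : Fin (n+1), dlam b i w = b.coord i (w +ᵥ b 0) - b.coord i (b 0) := by
    intro i
    have h := (b.coord i).map_vadd (b 0) w
    rw [h]; simp [dlam]
  simp only [LinearMap.coe_sum, Finset.sum_apply, LinearMap.zero_apply]
  rw [Finset.sum_congr rfl (fun i _ => key i), Finset.sum_sub_distrib,
    b.sum_coord_apply_eq_one, b.sum_coord_apply_eq_one, sub_self]

theorem card_filter_lt_univ {N : ℕ} (q : Fin N) :
    (Finset.univ.filter (· < q)).card = (q : ℕ) := by
  rw [show Finset.univ.filter (· < q) = Finset.Iio q from by ext x; simp]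
  exact Fin.card_Iio q

theorem card_filter_le_univ {N : ℕ} (q : Fin N) :
    (Finset.univ.filter (· ≤ q)).card = (q : ℕ) + 1 := by
  rw [show Finset.univ.filter (· ≤ q) = Finset.Iic q from by ext x; simp]
  exact Fin.card_Iic q

theorem orderEmb_lt_iff {s : Finset (Fin (n+1))} {m : ℕ} (h : s.card = m)
    {q : Fin (n+1)} (hq : q ∉ s) (i : Fin m) :
    s.orderEmbOfFin h i < q ↔ (i : ℕ) < (s.filter (· < q)).card := by
  constructor
  · intro hlt
    have hsub : (Finset.univ.filter (· ≤ i)).image (s.orderEmbOfFin h) ⊆ s.filter (· < q) := by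
      intro x hx
      simp only [Finset.mem_image, Finset.mem_filter, Finset.mem_univ, true_and] at hx ⊢
      obtain ⟨j, hj, rfl⟩ := hx
      exact ⟨Finset.orderEmbOfFin_mem s h j,
        lt_of_le_of_lt ((s.orderEmbOfFin h).le_iff_le.2 hj) hlt⟩
    have hc := Finset.card_le_card hsub
    rwa [Finset.card_image_of_injective _ (s.orderEmbOfFin h).injective,
      card_filter_le_univ, Nat.add_one_le_iff] at hc
  · intro hcard
    by_contra hnlt
    have hqlt : q < s.orderEmbOfFin h i := by
      rcases lt_or_eq_of_le (not_lt.1 hnlt) with h' | h'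
      · exact h'
      · exact absurd (h' ▸ Finset.orderEmbOfFin_mem s h i) hq
    have hsub : s.filter (· < q) ⊆ (Finset.univ.filter (· < i)).image (s.orderEmbOfFin h) := by
      intro x hx
      simp only [Finset.mem_filter] at hx
      obtain ⟨j, hj⟩ : ∃ j, s.orderEmbOfFin h j = x := by
        have : x ∈ Set.range (s.orderEmbOfFin h) := by
          rw [Finset.range_orderEmbOfFin]; exact hx.1
        exact this
      simp only [Finset.mem_image, Finset.mem_filter, Finset.mem_univ, true_and]
      refine ⟨j, ?_, hj⟩
      by_contra hji
      exact absurd (lt_trans (hj ▸ hx.2) hqlt)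
        (not_lt.2 ((s.orderEmbOfFin h).le_iff_le.2 (not_lt.1 hji)))
    have hc := Finset.card_le_card hsub
    rw [Finset.card_image_of_injective _ (s.orderEmbOfFin h).injective,
      card_filter_lt_univ] at hc
    omega

theorem cons_sorted_insert {s : Finset (Fin (n+1))} {m : ℕ} (h : s.card = m)
    {q : Fin (n+1)} (hq : q ∉ s) (h' : (insert q s).card = m + 1)
    (ha : (s.filter (· < q)).card < m + 1) :
    (Fin.cons q (fun i => s.orderEmbOfFin h i) : Fin (m+1) → Fin (n+1))
      = (fun i => (insert q s).orderEmbOfFin h' i) ∘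
        ⇑(Fin.cycleRange (⟨(s.filter (· < q)).card, ha⟩ : Fin (m+1)))⁻¹ := by
  set a : ℕ := (s.filter (· < q)).card with ha_def
  have ham : a ≤ m := by
    have := Finset.card_le_card (Finset.filter_subset (· < q) s)
    omega
  set t : Fin (m+1) := ⟨a, ha⟩ with ht_def
  set f : Fin (m+1) → Fin (n+1) :=
    (Fin.cons q (fun i => s.orderEmbOfFin h i) : Fin (m+1) → Fin (n+1)) ∘ ⇑(Fin.cycleRange t)
    with hf_def
  have hf1 : ∀ j : Fin (m+1), (hj : (j:ℕ) < a) → f j = s.orderEmbOfFin h ⟨j, by omega⟩ := by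
    intro j hj
    have hjt : j < t := by rw [Fin.lt_def]; exact hj
    have h1 : Fin.cycleRange t j = j + 1 := Fin.cycleRange_of_lt hjt
    have h2 : j + 1 = Fin.succ (⟨(j:ℕ), by omega⟩ : Fin m) := by
      ext
      rw [Fin.val_add_one_of_lt (lt_of_lt_of_le hjt (Fin.le_last t))]
      simp [Fin.val_succ]
    simp only [hf_def, Function.comp_apply, h1, h2, Fin.cons_succ]
  have hf2 : f t = q := by
    simp only [hf_def, Function.comp_apply, Fin.cycleRange_of_eq rfl, Fin.cons_zero]
  have hf3 : ∀ j : Fin (m+1), (hj : a < (j:ℕ)) → f j = s.orderEmbOfFin h ⟨(j:ℕ)-1, by omega⟩ := by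
    intro j hj
    have hjt : t < j := by rw [Fin.lt_def]; exact hj
    have h1 : Fin.cycleRange t j = j := Fin.cycleRange_of_gt hjt
    have h2 : j = Fin.succ (⟨(j:ℕ)-1, by omega⟩ : Fin m) := by
      ext; simp only [Fin.val_succ]; omega
    rw [hf_def]
    simp only [Function.comp_apply, h1]
    conv_lhs => rw [h2]
    rw [Fin.cons_succ]
  have hmono : StrictMono f := by
    intro x y hxy
    have hxy' : (x:ℕ) < (y:ℕ) := hxy
    rcases lt_trichotomy (x:ℕ) a with hx | hx | hx
    · rcases lt_trichotomy (y:ℕ) a with hy | hy | hy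
      · rw [hf1 x hx, hf1 y hy]
        exact (s.orderEmbOfFin h).strictMono (by rw [Fin.mk_lt_mk]; exact hxy')
      · rw [hf1 x hx, show y = t from Fin.ext hy, hf2]
        exact (orderEmb_lt_iff h hq _).2 hx
      · rw [hf1 x hx, hf3 y hy]
        exact (s.orderEmbOfFin h).strictMono (by rw [Fin.mk_lt_mk]; omega)
    · rcases lt_trichotomy (y:ℕ) a with hy | hy | hy
      · omega
      · omega
      · rw [show x = t from Fin.ext hx, hf2, hf3 y hy]
        have h1 : ¬ (s.orderEmbOfFin h ⟨(y:ℕ)-1, by omega⟩ < q) := by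
          rw [orderEmb_lt_iff h hq]; simp only [← ha_def]; omega
        have h2 : q ≠ s.orderEmbOfFin h ⟨(y:ℕ)-1, by omega⟩ := by
          intro hcontra
          exact hq (hcontra ▸ Finset.orderEmbOfFin_mem s h _)
        exact lt_of_le_of_ne (not_lt.1 h1) h2
    · rcases lt_trichotomy (y:ℕ) a with hy | hy | hy
      · omega
      · omega
      · rw [hf3 x hx, hf3 y hy]
        exact (s.orderEmbOfFin h).strictMono (by rw [Fin.mk_lt_mk]; omega)
  have hmem : ∀ x : Fin (m+1), f x ∈ insert q s := by
    intro x
    rcases lt_trichotomy (x:ℕ) a with hx | hx | hx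
    · rw [hf1 x hx]; exact Finset.mem_insert_of_mem (Finset.orderEmbOfFin_mem s h _)
    · rw [show x = t from Fin.ext hx, hf2]; exact Finset.mem_insert_self q s
    · rw [hf3 x hx]; exact Finset.mem_insert_of_mem (Finset.orderEmbOfFin_mem s h _)
  have huniq : f = fun i => (insert q s).orderEmbOfFin h' i :=
    Finset.orderEmbOfFin_unique h' hmem hmono
  funext x
  have hfx := congrFun huniq ((Fin.cycleRange t)⁻¹ x)
  simp only [hf_def, Function.comp_apply, Equiv.Perm.coe_inv, Equiv.apply_symm_apply] at hfx
  simp only [Function.comp_apply]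
  exact hfx

theorem units_smul_eq {a : ℕ} (X : ExteriorAlgebra ℝ (Module.Dual ℝ E)) :
    ((-1:ℤˣ)^a) • X = ((-1:ℝ)^a) • X := by
  rcases Nat.even_or_odd a with hpar | hpar
  · rw [hpar.neg_one_pow, hpar.neg_one_pow, one_smul, one_smul]
  · rw [hpar.neg_one_pow, hpar.neg_one_pow]
    rw [Units.smul_def]
    push_cast
    rw [neg_one_smul, neg_one_smul]

theorem iota_mul_sorted (b : AffineBasis (Fin (n + 1)) ℝ E) {s : Finset (Fin (n+1))} {m : ℕ}
    (h : s.card = m) {q : Fin (n+1)} (hq : q ∉ s) :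
    ι ℝ (dlam b q) * dlamWedge b (sortedOfFinset s m)
      = ((-1:ℝ)^((s.filter (· < q)).card)) • dlamWedge b (sortedOfFinset (insert q s) (m+1)) := by
  have h' : (insert q s).card = m + 1 := by rw [Finset.card_insert_of_notMem hq, h]
  have ham : (s.filter (· < q)).card < m + 1 := by
    have := Finset.card_le_card (Finset.filter_subset (· < q) s); omega
  set a : ℕ := (s.filter (· < q)).card with ha_def
  set t : Fin (m+1) := ⟨a, ham⟩ with ht_def
  rw [sortedOfFinset_eq h, sortedOfFinset_eq h']
  have step1 : ι ℝ (dlam b q) * dlamWedge b (fun i => s.orderEmbOfFin h i)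
      = ExteriorAlgebra.ιMulti ℝ (m+1)
          (fun i => dlam b ((Fin.cons q (fun j => s.orderEmbOfFin h j) : Fin (m+1) → Fin (n+1)) i)) := by
    rw [ExteriorAlgebra.ιMulti_apply, dlamWedge]
    rw [List.ofFn_succ]
    simp only [Fin.cons_zero, Fin.cons_succ, List.prod_cons]
  rw [step1, cons_sorted_insert h hq h' ham]
  have step2 : (fun i => dlam b (((fun i => (insert q s).orderEmbOfFin h' i) ∘
        ⇑(Fin.cycleRange t)⁻¹) i))
      = (fun i => dlam b ((insert q s).orderEmbOfFin h' i)) ∘ ⇑(Fin.cycleRange t)⁻¹ := rfl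
  rw [step2, AlternatingMap.map_perm, Equiv.Perm.sign_inv, Fin.sign_cycleRange]
  rw [dlamWedge_eq]
  exact units_smul_eq _

theorem card_erase_univ (p : Fin (n+1)) : (Finset.univ.erase p).card = n := by
  rw [Finset.card_erase_of_mem (Finset.mem_univ p), Finset.card_univ, Fintype.card_fin]
  omega

theorem sorted_erase_univ (p : Fin (n+1)) :
    sortedOfFinset (Finset.univ.erase p) n = p.succAbove := by
  rw [sortedOfFinset_eq (card_erase_univ p)]
  refine (Finset.orderEmbOfFin_unique (card_erase_univ p) (fun i => ?_)
    (Fin.strictMono_succAbove p)).symm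
  exact Finset.mem_erase.2 ⟨Fin.succAbove_ne p i, Finset.mem_univ _⟩

theorem erase_adjacent (b : AffineBasis (Fin (n + 1)) ℝ E) (p : Fin n) :
    ExteriorAlgebra.ιMulti ℝ n (fun i => dlam b ((Fin.castSucc p).succAbove i))
      = - ExteriorAlgebra.ιMulti ℝ n (fun i => dlam b ((Fin.succ p).succAbove i)) := by
  set u : Fin n → Module.Dual ℝ E := fun i => dlam b ((Fin.succ p).succAbove i) with hu_def
  have hup : u p = dlam b (Fin.castSucc p) := by
    rw [hu_def]
    simp only []
    rw [Fin.succAbove_of_castSucc_lt _ _ (Fin.castSucc_lt_succ (i := p))]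
  have h1 : (fun i => dlam b ((Fin.castSucc p).succAbove i))
      = Function.update u p (dlam b (Fin.succ p)) := by
    funext i
    rcases eq_or_ne i p with rfl | hip
    · rw [Function.update_self]
      rw [Fin.succAbove_of_le_castSucc _ _ (le_refl _)]
    · rw [Function.update_of_ne hip, hu_def]
      simp only []
      rcases lt_or_gt_of_ne hip with hlt | hgt
      · rw [Fin.succAbove_of_castSucc_lt _ _ (Fin.castSucc_lt_castSucc_iff.2 hlt),
          Fin.succAbove_of_castSucc_lt _ _ (lt_trans (Fin.castSucc_lt_castSucc_iff.2 hlt)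
            (Fin.castSucc_lt_succ (i := p)))]
      · rw [Fin.succAbove_of_le_castSucc _ _ (le_of_lt (Fin.castSucc_lt_castSucc_iff.2 hgt)),
          Fin.succAbove_of_le_castSucc _ _ (Fin.succ_le_castSucc_iff.2 hgt)]
  have h2 : dlam b (Fin.succ p) = - ∑ j ∈ Finset.univ.erase (Fin.succ p), dlam b j := by
    have h3 := sum_dlam b
    rw [← Finset.sum_erase_add _ _ (Finset.mem_univ (Fin.succ p))] at h3
    exact (neg_eq_of_add_eq_zero_right h3).symm
  rw [h1, h2]
  rw [show ((ExteriorAlgebra.ιMulti ℝ n : AlternatingMap ℝ (Module.Dual ℝ E) _ (Fin n))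
        (Function.update u p (-∑ j ∈ Finset.univ.erase (Fin.succ p), dlam b j)))
      = -((ExteriorAlgebra.ιMulti ℝ n)
        (Function.update u p (∑ j ∈ Finset.univ.erase (Fin.succ p), dlam b j)))
    from MultilinearMap.map_update_neg _ u p _]
  rw [show ((ExteriorAlgebra.ιMulti ℝ n : AlternatingMap ℝ (Module.Dual ℝ E) _ (Fin n))
        (Function.update u p (∑ j ∈ Finset.univ.erase (Fin.succ p), dlam b j)))
      = ∑ j ∈ Finset.univ.erase (Fin.succ p),
          (ExteriorAlgebra.ιMulti ℝ n) (Function.update u p (dlam b j))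
    from MultilinearMap.map_update_sum _ _ p _ u]
  rw [Finset.sum_eq_single_of_mem (Fin.castSucc p)
    (Finset.mem_erase.2 ⟨(Fin.castSucc_lt_succ (i := p)).ne, Finset.mem_univ _⟩)]
  · rw [← hup, Function.update_eq_self]
  · intro j hj hjne
    have hjne' : j ≠ Fin.succ p := (Finset.mem_erase.1 hj).1
    obtain ⟨i, hi⟩ : ∃ i : Fin n, (Fin.succ p).succAbove i = j := by
      have : j ∈ Set.range (Fin.succ p).succAbove := by
        rw [Fin.range_succAbove]
        exact hjne'
      exact this
    have hip : i ≠ p := by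
      intro hcontra
      rw [hcontra] at hi
      rw [Fin.succAbove_of_castSucc_lt _ _ (Fin.castSucc_lt_succ (i := p))] at hi
      exact hjne hi.symm
    refine AlternatingMap.map_eq_zero_of_eq _ _ (i := p) (j := i) ?_ (Ne.symm hip)
    rw [Function.update_self, Function.update_of_ne hip, hu_def]
    simp only []
    rw [hi]

theorem wedge_erase (b : AffineBasis (Fin (n + 1)) ℝ E) (p : Fin (n+1)) :
    dlamWedge b (sortedOfFinset (Finset.univ.erase p) n)
      = ((-1:ℝ)^(p:ℕ)) • dlamWedge b (sortedOfFinset (Finset.univ.erase 0) n) := by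
  rw [sorted_erase_univ, sorted_erase_univ, dlamWedge_eq, dlamWedge_eq]
  induction p using Fin.induction with
  | zero => simp
  | succ i ih =>
    have hadj := erase_adjacent b i
    have hswap : ExteriorAlgebra.ιMulti ℝ n (fun j => dlam b ((Fin.succ i).succAbove j))
        = - ExteriorAlgebra.ιMulti ℝ n (fun j => dlam b ((Fin.castSucc i).succAbove j)) := by
      rw [hadj, neg_neg]
    rw [hswap, ih]
    rw [Fin.val_succ, Fin.coe_castSucc, pow_succ, ← neg_smul]
    ring_nf

theorem whitney_id (b : AffineBasis (Fin (n + 1)) ℝ E) (x : E) :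
    whitneyForm b (id : Fin (n+1) → Fin (n+1)) x
      = dlamWedge b (sortedOfFinset (Finset.univ.erase 0) n) := by
  unfold whitneyForm
  have himg : Finset.image (id : Fin (n+1) → Fin (n+1)) Finset.univ = Finset.univ :=
    Finset.image_id
  have heps : ∀ j : Fin (n+1), ((epsIns j (Finset.univ.erase j) : ℤ) : ℝ) = (-1:ℝ)^(j:ℕ) := by
    intro j
    unfold epsIns
    have hfe : (Finset.univ.erase j).filter (fun x => x < j) =
        Finset.univ.filter (· < j) := by
      rw [Finset.filter_erase]
      exact Finset.erase_eq_of_notMem (fun hc => absurd (Finset.mem_filter.1 hc).2 (lt_irrefl j))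
    push_cast
    rw [hfe, card_filter_lt_univ]
  simp only [himg, id_eq]
  have hterm : ∀ j : Fin (n+1),
      ((epsIns j (Finset.univ.erase j) : ℝ) * b.coord j x) •
        dlamWedge b (sortedOfFinset (Finset.univ.erase j) (n + 1 - 1))
      = b.coord j x • dlamWedge b (sortedOfFinset (Finset.univ.erase 0) n) := by
    intro j
    have hn1 : n + 1 - 1 = n := rfl
    rw [hn1, wedge_erase b j, heps, smul_smul]
    congr 1
    have hx : (-1:ℝ)^(j:ℕ) * b.coord j x * (-1:ℝ)^(j:ℕ)
        = b.coord j x * ((-1:ℝ)^(j:ℕ) * (-1:ℝ)^(j:ℕ)) := by ring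
    rw [hx, ← pow_add, Even.neg_one_pow ⟨(j:ℕ), rfl⟩, mul_one]
  rw [Finset.sum_congr rfl (fun j _ => hterm j), ← Finset.sum_smul,
    b.sum_coord_apply_eq_one, one_smul]

theorem dlamWedge_mul_sorted (b : AffineBasis (Fin (n + 1)) ℝ E) (k : ℕ) :
    ∀ (σ : Fin k → Fin (n+1)), StrictMono σ →
    ∀ (s : Finset (Fin (n+1))) (m : ℕ), s.card = m → (∀ i, σ i ∉ s) →
    dlamWedge b σ * dlamWedge b (sortedOfFinset s m)
      = ((-1:ℝ)^(∑ i, (s.filter (· < σ i)).card)) •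
          dlamWedge b (sortedOfFinset (s ∪ Finset.image σ Finset.univ) (m + k)) := by
  induction k with
  | zero =>
    intro σ hσ s m hcard hdisj
    have h1 : dlamWedge b σ = 1 := by
      rw [dlamWedge, List.ofFn_zero, List.prod_nil]
    have h2 : Finset.image σ Finset.univ = ∅ := by
      rw [Finset.univ_eq_empty, Finset.image_empty]
    rw [h1, h2, Finset.union_empty, one_mul]
    simp
  | succ k ih =>
    intro σ hσ s m hcard hdisj
    set τ : Fin k → Fin (n+1) := Fin.tail σ with hτ_def
    have hτ : StrictMono τ := hσ.comp Fin.strictMono_succ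
    have hdisjτ : ∀ i, τ i ∉ s := fun i => hdisj i.succ
    have hpeel : dlamWedge b σ = ι ℝ (dlam b (σ 0)) * dlamWedge b τ := by
      rw [dlamWedge, dlamWedge, List.ofFn_succ, List.prod_cons]
      rfl
    set S' : Finset (Fin (n+1)) := s ∪ Finset.image τ Finset.univ with hS'_def
    have hdisjUnion : Disjoint s (Finset.image τ Finset.univ) := by
      rw [Finset.disjoint_right]
      intro a ha has
      obtain ⟨i, _, rfl⟩ := Finset.mem_image.1 ha
      exact hdisjτ i has
    have hS'card : S'.card = m + k := by
      rw [hS'_def, Finset.card_union_of_disjoint hdisjUnion, hcard,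
        Finset.card_image_of_injective _ hτ.injective, Finset.card_univ, Fintype.card_fin]
    have hq : σ 0 ∉ S' := by
      rw [hS'_def, Finset.mem_union]
      rintro (h | h)
      · exact hdisj 0 h
      · obtain ⟨i, _, hi⟩ := Finset.mem_image.1 h
        exact absurd hi.symm (ne_of_lt (hσ (Fin.succ_pos i)))
    have hins : insert (σ 0) S' = s ∪ Finset.image σ Finset.univ := by
      have himg : Finset.image σ Finset.univ = insert (σ 0) (Finset.image τ Finset.univ) := by
        ext a
        simp only [Finset.mem_image, Finset.mem_insert, Finset.mem_univ, true_and]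
        rw [Fin.exists_fin_succ]
        constructor
        · rintro (h | ⟨i, hi⟩)
          · exact Or.inl h.symm
          · exact Or.inr ⟨i, hi⟩
        · rintro (h | ⟨i, hi⟩)
          · exact Or.inl h.symm
          · exact Or.inr ⟨i, hi⟩
      rw [himg, Finset.union_insert]
    have hfilter : (S'.filter (· < σ 0)).card = (s.filter (· < σ 0)).card := by
      rw [hS'_def, Finset.filter_union]
      have hempty : (Finset.image τ Finset.univ).filter (· < σ 0) = ∅ := by
        rw [Finset.filter_eq_empty_iff]
        intro a ha
        obtain ⟨i, _, rfl⟩ := Finset.mem_image.1 ha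
        exact not_lt.2 (le_of_lt (hσ (Fin.succ_pos i)))
      rw [hempty, Finset.union_empty]
    rw [hpeel, mul_assoc, ih τ hτ s m hcard hdisjτ, mul_smul_comm,
      iota_mul_sorted b hS'card hq, hins, hfilter, smul_smul, ← pow_add]
    congr 2
    rw [Fin.sum_univ_succ]
    have htail : ∀ i : Fin k, τ i = σ i.succ := fun i => rfl
    simp only [htail]
    ring

theorem append_ge {k m : ℕ} (σ : Fin k → Fin (n+1)) (τ : Fin m → Fin (n+1))
    (p1 : Fin (k+m)) (h1' : k ≤ (p1:ℕ)) :
    Fin.append σ τ p1 = τ ⟨(p1:ℕ) - k, by omega⟩ := by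
  conv_lhs => rw [show p1 = Fin.natAdd k ⟨(p1:ℕ) - k, by omega⟩ from
    by ext; simp only [Fin.coe_natAdd]; omega]
  exact Fin.append_right σ τ _

theorem append_lt {k m : ℕ} (σ : Fin k → Fin (n+1)) (τ : Fin m → Fin (n+1))
    (p1 : Fin (k+m)) (h1 : (p1:ℕ) < k) :
    Fin.append σ τ p1 = σ ⟨(p1:ℕ), h1⟩ := by
  conv_lhs => rw [show p1 = Fin.castAdd m ⟨(p1:ℕ), h1⟩ from by ext; rfl]
  exact Fin.append_left σ τ _

theorem invSign_append {k m : ℕ} (σ : Fin k → Fin (n+1)) (τ : Fin m → Fin (n+1))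
    (hσ : StrictMono σ) (hτ : StrictMono τ) :
    invSign (Fin.append σ τ)
      = (-1:ℤ)^(∑ i, ((Finset.image τ Finset.univ).filter (· < σ i)).card) := by
  unfold invSign
  congr 1
  have hA : (Finset.univ.filter (fun p : Fin (k+m) × Fin (k+m) =>
        p.1 < p.2 ∧ Fin.append σ τ p.2 < Fin.append σ τ p.1))
      = (Finset.univ.filter (fun p : Fin k × Fin m => τ p.2 < σ p.1)).image
          (fun p => (Fin.castAdd m p.1, Fin.natAdd k p.2)) := by
    ext ⟨p1, p2⟩
    simp only [Finset.mem_filter, Finset.mem_univ, true_and, Finset.mem_image, Prod.mk.injEq,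
      Prod.exists]
    constructor
    · rintro ⟨hlt, hinv⟩
      by_cases h1 : (p1 : ℕ) < k
      · by_cases h2 : (p2 : ℕ) < k
        · exfalso
          rw [append_lt σ τ p1 h1, append_lt σ τ p2 h2] at hinv
          have hlt2 : (⟨(p1:ℕ), h1⟩ : Fin k) < ⟨(p2:ℕ), h2⟩ := hlt
          exact absurd (hσ hlt2) (not_lt.2 (le_of_lt hinv))
        · have h2' : k ≤ (p2 : ℕ) := not_lt.1 h2
          refine ⟨⟨(p1:ℕ), h1⟩, ⟨(p2:ℕ) - k, by omega⟩, ?_, ?_, ?_⟩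
          · rw [append_lt σ τ p1 h1, append_ge σ τ p2 h2'] at hinv
            exact hinv
          · ext; rfl
          · ext; simp only [Fin.coe_natAdd]; omega
      · exfalso
        have h1' : k ≤ (p1 : ℕ) := not_lt.1 h1
        have h2' : k ≤ (p2 : ℕ) := by
          have : (p1:ℕ) < (p2:ℕ) := hlt
          omega
        rw [append_ge σ τ p1 h1', append_ge σ τ p2 h2'] at hinv
        have hlt2 : (⟨(p1:ℕ) - k, by omega⟩ : Fin m) < ⟨(p2:ℕ) - k, by omega⟩ := by
          rw [Fin.mk_lt_mk]
          have : (p1:ℕ) < (p2:ℕ) := hlt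
          omega
        exact absurd (hτ hlt2) (not_lt.2 (le_of_lt hinv))
    · rintro ⟨i, j, hij, h1, h2⟩
      subst h1; subst h2
      refine ⟨?_, ?_⟩
      · rw [Fin.lt_def]
        simp only [Fin.coe_castAdd, Fin.coe_natAdd]
        omega
      · rw [Fin.append_left, Fin.append_right]
        exact hij
  rw [hA, Finset.card_image_of_injective]
  swap
  · intro p q hpq
    simp only [Prod.mk.injEq] at hpq
    have h1 := congrArg Fin.val hpq.1
    have h2 := congrArg Fin.val hpq.2
    simp only [Fin.coe_castAdd, Fin.coe_natAdd] at h1 h2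
    ext
    · exact h1
    · omega
  rw [Finset.card_filter, Fintype.sum_prod_type]
  refine Finset.sum_congr rfl (fun i _ => ?_)
  rw [Finset.filter_image, Finset.card_image_of_injective _ hτ.injective,
    Finset.card_filter]

theorem neg_one_pow_parity (a b : ℕ) (h : a % 2 = b % 2) : (-1:ℝ)^a = (-1:ℝ)^b := by
  rcases Nat.even_or_odd a with ha | ha
  · have hb : Even b := by rw [Nat.even_iff] at *; omega
    rw [ha.neg_one_pow, hb.neg_one_pow]
  · have hb : Odd b := by rw [Nat.odd_iff] at *; omega
    rw [ha.neg_one_pow, hb.neg_one_pow]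

/-- Let `0 ≤ k ≤ n` and `σ ∈ Σ(k,n)` with complement `σ^c ∈ Σ_0(n−k,n)` (the increasing
enumeration of `[0:n] ∖ [σ]`).  Then
`dλ_σ ∧ φ_{σ^c} = (−1)^k ε(σ,σ^c) Σ_{q ∈ [σ^c]} λ_q φ_T`, where `φ_T` is the Whitney
form of the full index set `[0:n]` and `ε(σ,σ^c)` is the sign of the permutation ordering
the concatenation `σ(1),…,σ(k),σ^c(0),…,σ^c(n−k)` (computed by counting inversions). -/
theorem dlam_wedge_whitney_compl_self {n : ℕ} {E : Type*} [AddCommGroup E] [Module ℝ E]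
    (b : AffineBasis (Fin (n + 1)) ℝ E) {k : ℕ} (hk : k ≤ n)
    (σ : Fin k → Fin (n + 1)) (hσ : StrictMono σ) :
    ∀ x : E,
      dlamWedge b σ *
          whitneyForm b (sortedOfFinset (Finset.image σ Finset.univ)ᶜ (n + 1 - k)) x =
        ((-1 : ℝ) ^ k *
            (invSign
              (Fin.append σ (sortedOfFinset (Finset.image σ Finset.univ)ᶜ (n + 1 - k))) : ℝ)) •
          ∑ q ∈ (Finset.image σ Finset.univ)ᶜ,
            b.coord q x • whitneyForm b (id : Fin (n + 1) → Fin (n + 1)) x := by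
  intro x
  classical
  set c : Finset (Fin (n+1)) := (Finset.image σ Finset.univ)ᶜ with hc_def
  have hkimg : (Finset.image σ Finset.univ).card = k := by
    rw [Finset.card_image_of_injective _ hσ.injective, Finset.card_univ, Fintype.card_fin]
  have hccard : c.card = n + 1 - k := by
    rw [hc_def, Finset.card_compl, hkimg, Fintype.card_fin]
  have hρfun : sortedOfFinset c (n+1-k) = fun i => c.orderEmbOfFin hccard i :=
    sortedOfFinset_eq hccard
  have himg' : Finset.image (fun i => c.orderEmbOfFin hccard i) Finset.univ = c := by
    ext a
    simp only [Finset.mem_image, Finset.mem_univ, true_and]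
    constructor
    · rintro ⟨i, rfl⟩; exact Finset.orderEmbOfFin_mem c hccard i
    · intro ha
      have hr : a ∈ Set.range (c.orderEmbOfFin hccard) := by
        rw [Finset.range_orderEmbOfFin]; exact ha
      obtain ⟨i, hi⟩ := hr
      exact ⟨i, hi⟩
  have hmonoρ : StrictMono (fun i => c.orderEmbOfFin hccard i) :=
    (c.orderEmbOfFin hccard).strictMono
  have hinj : ∀ x' ∈ Finset.univ, ∀ y' ∈ Finset.univ,
      c.orderEmbOfFin hccard x' = c.orderEmbOfFin hccard y' → x' = y' :=
    fun x' _ y' _ hxy => (c.orderEmbOfFin hccard).injective hxy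
  rw [whitney_id b x, hρfun, invSign_append σ _ hσ hmonoρ]
  simp only [whitneyForm, himg']
  rw [Finset.mul_sum]
  have hsum : (∑ q ∈ c, b.coord q x • dlamWedge b (sortedOfFinset (Finset.univ.erase 0) n))
      = ∑ j : Fin (n+1-k), b.coord (c.orderEmbOfFin hccard j) x •
          dlamWedge b (sortedOfFinset (Finset.univ.erase 0) n) := by
    conv_lhs => rw [← himg']
    exact Finset.sum_image hinj
  rw [hsum, Finset.smul_sum]
  refine Finset.sum_congr rfl (fun j _ => ?_)
  set q : Fin (n+1) := c.orderEmbOfFin hccard j with hq_def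
  have hqc : q ∈ c := Finset.orderEmbOfFin_mem c hccard j
  have hqnotimg : q ∉ Finset.image σ Finset.univ := by
    rw [hc_def] at hqc
    exact Finset.mem_compl.1 hqc
  have hqcard : (c.erase q).card = n + 1 - k - 1 := by
    rw [Finset.card_erase_of_mem hqc, hccard]
  have hdisjq : ∀ i, σ i ∉ c.erase q := by
    intro i hi
    have hic : σ i ∈ c := Finset.mem_of_mem_erase hi
    rw [hc_def, Finset.mem_compl] at hic
    exact hic (Finset.mem_image_of_mem σ (Finset.mem_univ i))
  have hun : (c.erase q) ∪ Finset.image σ Finset.univ = Finset.univ.erase q := by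
    ext a
    simp only [Finset.mem_union, Finset.mem_erase, Finset.mem_univ, and_true]
    constructor
    · rintro (⟨hne, _⟩ | himgz)
      · exact hne
      · exact fun he => hqnotimg (he ▸ himgz)
    · intro hne
      by_cases ha : a ∈ Finset.image σ Finset.univ
      · exact Or.inr ha
      · exact Or.inl ⟨hne, by rw [hc_def]; exact Finset.mem_compl.2 ha⟩
  have hnk : n + 1 - k - 1 + k = n := by omega
  have heps : ((epsIns q (c.erase q) : ℤ) : ℝ) = (-1:ℝ)^((c.filter (· < q)).card) := by
    unfold epsIns
    have hfe : (c.erase q).filter (fun x => x < q) = c.filter (fun x => x < q) := by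
      rw [Finset.filter_erase]
      exact Finset.erase_eq_of_notMem
        (fun hcm => absurd (Finset.mem_filter.1 hcm).2 (lt_irrefl q))
    push_cast
    rw [hfe]
  rw [mul_smul_comm, dlamWedge_mul_sorted b k σ hσ (c.erase q) (n+1-k-1) hqcard hdisjq,
    hun, dlamWedge_sorted_congr b hnk, wedge_erase b q, heps]
  rw [smul_smul, smul_smul, smul_smul]
  congr 1
  push_cast
  -- now a pure real-number identity
  set a : ℕ := (c.filter (· < q)).card with ha_def
  set Nq : ℕ := ∑ i, ((c.erase q).filter (· < σ i)).card with hNq_def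
  set N : ℕ := ∑ i, (c.filter (· < σ i)).card with hN_def
  set Klt : ℕ := (Finset.univ.filter (fun i => σ i < q)).card with hKlt_def
  set Kgt : ℕ := (Finset.univ.filter (fun i => q < σ i)).card with hKgt_def
  have hstep : ∀ i : Fin k, (c.filter (· < σ i)).card
      = ((c.erase q).filter (· < σ i)).card + (if q < σ i then 1 else 0) := by
    intro i
    conv_lhs => rw [← Finset.insert_erase hqc]
    rw [Finset.filter_insert]
    by_cases hlt : q < σ i
    · rw [if_pos hlt, if_pos hlt, Finset.card_insert_of_notMem
        (fun hcm => absurd (Finset.mem_of_mem_filter _ hcm) (Finset.notMem_erase q c))]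
    · rw [if_neg hlt, if_neg hlt, add_zero]
  have hN1 : N = Nq + Kgt := by
    rw [hN_def, Finset.sum_congr rfl (fun i _ => hstep i), Finset.sum_add_distrib, hNq_def,
      hKgt_def, Finset.card_filter]
  have hcu : c ∪ Finset.image σ Finset.univ = Finset.univ := by
    rw [hc_def]
    ext a'
    simp only [Finset.mem_union, Finset.mem_compl, Finset.mem_univ, iff_true]
    exact (em _).symm
  have hdisj2 : Disjoint (c.filter (· < q)) ((Finset.image σ Finset.univ).filter (· < q)) :=
    Finset.disjoint_filter_filter (by rw [hc_def]; exact disjoint_compl_left)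
  have himgfilter : ((Finset.image σ Finset.univ).filter (· < q)).card = Klt := by
    rw [Finset.filter_image, Finset.card_image_of_injective _ hσ.injective, hKlt_def]
  have hA : (q:ℕ) = a + Klt := by
    have h0 := card_filter_lt_univ q
    rw [← hcu, Finset.filter_union, Finset.card_union_of_disjoint hdisj2, himgfilter] at h0
    rw [← h0, ha_def]
  have hK : Klt + Kgt = k := by
    have h3 := Finset.card_filter_add_card_filter_not
      (s := (Finset.univ : Finset (Fin k))) (p := fun i => σ i < q)
    have hcongr : Finset.univ.filter (fun i => ¬ σ i < q)
        = Finset.univ.filter (fun i => q < σ i) := by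
      apply Finset.filter_congr
      intro i _
      constructor
      · intro hnot
        exact lt_of_le_of_ne (not_lt.1 hnot)
          (fun he => hqnotimg (by rw [he]; exact Finset.mem_image_of_mem σ (Finset.mem_univ i)))
      · intro hlt
        exact not_lt.2 (le_of_lt hlt)
    rw [hcongr, Finset.card_univ, Fintype.card_fin] at h3
    rw [hKlt_def, hKgt_def]
    exact h3
  have hpow : (-1:ℝ)^a * ((-1:ℝ)^Nq * (-1:ℝ)^((q:ℕ)))
      = (-1:ℝ)^k * (-1:ℝ)^N := by
    rw [← pow_add, ← pow_add, ← pow_add]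
    exact neg_one_pow_parity _ _ (by omega)
  calc ((-1:ℝ)^a * b.coord q x * (-1:ℝ)^Nq) * (-1:ℝ)^((q:ℕ))
      = ((-1:ℝ)^a * ((-1:ℝ)^Nq * (-1:ℝ)^((q:ℕ)))) * b.coord q x := by ring
    _ = ((-1:ℝ)^k * (-1:ℝ)^N) * b.coord q x := by rw [hpow]
    _ = (-1:ℝ)^k * (-1:ℝ)^N * b.coord q x := by ring
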